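/- For homogeneous λ in the Z3-graded Grassmann algebra and any Z3-matrix M, tr_{Z3}(λM) = λ tr_{Z3}(M) and tr_{Z3}(Mλ) = tr_{Z3}(M) λ, where λM and Mλ are defined via multiplication by diag(λ, j^{2∂λ}λ, j^{∂λ}λ). -/
import Mathlib


noncomputable section

/-- `j = e^{2πi/3}`, a primitive cube root of unity. -/
def jj : ℂ := Complex.exp (2 * Real.pi * Complex.I / 3)

namespace Z3

/-- Generators: `Sum.inl i` is the grade-1 generator `θ_i`,
`Sum.inr i` is the grade-2 generator `θ̄_i`. -/
abbrev Gen (N : ℕ) := Fin N ⊕ Fin N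

/-- Grade of a generator. -/
def genGrade {N : ℕ} : Gen N → ZMod 3
  | Sum.inl _ => 1
  | Sum.inr _ => 2

/-- Grade of a word in the generators (sum of the grades mod 3). -/
def wGrade {N : ℕ} (w : List (Gen N)) : ZMod 3 := (w.map genGrade).sum

/-- The product in the free algebra of the letters of a word. -/
def wProd {N : ℕ} (w : List (Gen N)) : FreeAlgebra ℂ (Gen N) :=
  (w.map (FreeAlgebra.ι ℂ)).prod

/-- Defining relations of the `ℤ₃`-graded Grassmann algebra: homogeneous
grade-0 elements are central, and `A Ā = j Ā A` for `A` of grade 1 and `Ā` of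
grade 2. -/
inductive Rel (N : ℕ) : FreeAlgebra ℂ (Gen N) → FreeAlgebra ℂ (Gen N) → Prop
  | central (w₁ w₂ : List (Gen N)) (h : wGrade w₁ = 0) :
      Rel N (wProd w₁ * wProd w₂) (wProd w₂ * wProd w₁)
  | comm12 (w₁ w₂ : List (Gen N)) (h₁ : wGrade w₁ = 1) (h₂ : wGrade w₂ = 2) :
      Rel N (wProd w₁ * wProd w₂) (jj • (wProd w₂ * wProd w₁))

/-- The `ℤ₃`-graded Grassmann algebra on `N` grade-1 generators `θ_i` and `N`
grade-2 generators `θ̄_i`. -/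
abbrev G (N : ℕ) := RingQuot (Rel N)

/-- The canonical quotient map. -/
def mk (N : ℕ) : FreeAlgebra ℂ (Gen N) →ₐ[ℂ] G N := RingQuot.mkAlgHom ℂ (Rel N)

/-- The homogeneous component of grade `g`: the span of (classes of) words of
grade `g`. -/
def 𝒢 {N : ℕ} (g : ZMod 3) : Submodule ℂ (G N) :=
  Submodule.span ℂ {x | ∃ w : List (Gen N), wGrade w = g ∧ x = mk N (wProd w)}

/-- The "body" map on the free algebra, sending every generator to `0`. -/
def bodyF (N : ℕ) : FreeAlgebra ℂ (Gen N) →ₐ[ℂ] ℂ :=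
  FreeAlgebra.lift ℂ (fun _ : Gen N => (0 : ℂ))

lemma bodyF_wProd_ne_nil {N : ℕ} (w : List (Gen N)) (hw : w ≠ []) :
    bodyF N (wProd w) = 0 := by
  cases w with
  | nil => exact absurd rfl hw
  | cons a t =>
      simp only [wProd, List.map_cons, List.prod_cons, map_mul, bodyF,
        FreeAlgebra.lift_ι_apply, zero_mul]

lemma wGrade_ne_nil {N : ℕ} {w : List (Gen N)} {g : ZMod 3} (h : wGrade w = g)
    (hg : g ≠ 0) : w ≠ [] := by
  intro e; subst e; simp [wGrade] at h; exact hg h.symm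

/-- The body (augmentation) map of the Grassmann algebra: coefficient of the
unit `I`. -/
def bodyA (N : ℕ) : G N →ₐ[ℂ] ℂ :=
  RingQuot.liftAlgHom ℂ ⟨bodyF N, by
    intro x y h
    cases h with
    | central w₁ w₂ h => simp only [map_mul]; ring
    | comm12 w₁ w₂ h₁ h₂ =>
        have h1 : bodyF N (wProd w₁) = 0 :=
          bodyF_wProd_ne_nil w₁ (wGrade_ne_nil h₁ (by decide))
        simp [map_mul, map_smul, h1]⟩

end Z3

namespace Z3

/-- Index type for `3×3` block matrices with block sizes `n 0, n 1, n 2`. -/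
abbrev Idx (n : Fin 3 → ℕ) := Σ r : Fin 3, Fin (n r)

/-- A `ℤ₃`-matrix: a `3×3` block matrix with Grassmann entries. -/
abbrev ZMat (N : ℕ) (n : Fin 3 → ℕ) := Matrix (Idx n) (Idx n) (G N)

/-- A `ℤ₃`-matrix is homogeneous of grade `g` when the entry in block
position `(r,s)` has Grassmann grade `g + r - s (mod 3)` (equivalently, the
grade of the matrix is the sum mod 3 of the block-position grade `s - r` and
the Grassmann grade of the entries of that block). -/
def MGrade {N : ℕ} {n : Fin 3 → ℕ} (g : ZMod 3) (M : ZMat N n) : Prop :=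
  ∀ p q : Idx n, M p q ∈ 𝒢 (g + (p.1.val : ZMod 3) - (q.1.val : ZMod 3))

/-- Weights of the three diagonal blocks appearing in the `ℤ₃`-trace and in
scalar multiplication: `(1, j^2, j)` raised to suitable powers. -/
def wt : Fin 3 → ZMod 3 := ![0, 2, 1]

/-- The `ℤ₃`-trace of a `ℤ₃`-matrix of grade `g` with diagonal blocks
`A, E, I` is `tr A + j^{2(1-g)} tr E + j^{(1-g)} tr I`. -/
def ztrace {N : ℕ} {n : Fin 3 → ℕ} (g : ZMod 3) (M : ZMat N n) : G N :=
  ∑ p : Idx n, (jj ^ ((wt p.1 * (1 - g)).val)) • M p p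

/-- The diagonal `ℤ₃`-matrix `diag(λ, j^{2∂λ} λ, j^{∂λ} λ)` implementing the
scalar multiplication by a homogeneous Grassmann element `λ` of grade `d`. -/
def lamMat (N : ℕ) (n : Fin 3 → ℕ) (lam : G N) (d : ZMod 3) : ZMat N n :=
  Matrix.diagonal fun p => (jj ^ ((wt p.1 * d).val)) • lam

/-- Left product of a `ℤ₃`-matrix by a homogeneous Grassmann element of
grade `d`. -/
def smulL {N : ℕ} {n : Fin 3 → ℕ} (lam : G N) (d : ZMod 3) (M : ZMat N n) : ZMat N n :=
  lamMat N n lam d * M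

/-- Right product of a `ℤ₃`-matrix by a homogeneous Grassmann element of
grade `d`. -/
def smulR {N : ℕ} {n : Fin 3 → ℕ} (M : ZMat N n) (lam : G N) (d : ZMod 3) : ZMat N n :=
  M * lamMat N n lam d

end Z3

lemma jj_cube : jj ^ 3 = 1 := by
  rw [jj, ← Complex.exp_nat_mul]
  have : ((3 : ℕ) : ℂ) * (2 * Real.pi * Complex.I / 3) = 2 * Real.pi * Complex.I := by
    push_cast; ring
  rw [this, Complex.exp_two_pi_mul_I]

lemma jj_pow_mod (m : ℕ) : jj ^ (m % 3) = jj ^ m := by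
  conv_rhs => rw [← Nat.div_add_mod m 3]
  rw [pow_add, pow_mul, jj_cube, one_pow, one_mul]

lemma jj_pow_val_add (a b : ZMod 3) :
    jj ^ a.val * jj ^ b.val = jj ^ ((a + b).val) := by
  rw [ZMod.val_add, jj_pow_mod, ← pow_add]

/-- for a homogeneous Grassmann element `λ` of grade `d` and a
homogeneous `ℤ₃`-matrix `M` of grade `g`, `tr_{ℤ₃}(λM) = λ tr_{ℤ₃}(M)` and
`tr_{ℤ₃}(Mλ) = tr_{ℤ₃}(M) λ` (the products `λM`, `Mλ` being homogeneous of
grade `g + d`). -/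
theorem ztrace_smul (N : ℕ) (n : Fin 3 → ℕ)
    (lam : Z3.G N) (d : ZMod 3) (hlam : lam ∈ Z3.𝒢 d)
    (g : ZMod 3) (M : Z3.ZMat N n) (hM : Z3.MGrade g M) :
    Z3.ztrace (g + d) (Z3.smulL lam d M) = lam * Z3.ztrace g M ∧
    Z3.ztrace (g + d) (Z3.smulR M lam d) = Z3.ztrace g M * lam := by
  have key : ∀ p : Z3.Idx n,
      (Z3.wt p.1 * (1 - (g + d))) + (Z3.wt p.1 * d) = Z3.wt p.1 * (1 - g) := by
    intro p; ring
  constructor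
  · rw [Z3.ztrace, Z3.ztrace, Finset.mul_sum]
    apply Finset.sum_congr rfl
    intro p _
    rw [Z3.smulL, Z3.lamMat, Matrix.diagonal_mul, smul_mul_assoc, smul_smul,
      jj_pow_val_add, key p, mul_smul_comm]
  · rw [Z3.ztrace, Z3.ztrace, Finset.sum_mul]
    apply Finset.sum_congr rfl
    intro p _
    rw [Z3.smulR, Z3.lamMat, Matrix.mul_diagonal, mul_smul_comm, smul_smul,
      jj_pow_val_add, key p, smul_mul_assoc]
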